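/- The minimum of two stochastic supersolutions is a stochastic supersolution: if $w_1, w_2 \in C_b(\overline{G})$ each satisfy $w_i \ge g$ on $\partial G$ and $\mathsf{E}(Z^{\tau,\xi,\alpha}_\rho(w_i) \mid \mathscr{F}_\tau) \le Z^{\tau,\xi,\alpha}_\tau(w_i)$ for all admissible data, then $w_1 \wedge w_2$ satisfies the same properties. -/
import Mathlib


open MeasureTheory

/-- The minimum of two stochastic supersolutions is a stochastic supersolution.
Abstractly, `Zρ w ω = I ω + discρ ω * w (Xρ ω)` and `Zτ w ω = discτ ω * w (ξ ω)` with
nonnegative discount factors; if each `wᵢ` is continuous, bounded, dominates `g` on `∂G`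
and satisfies `E(Zρ wᵢ | m) ≤ Zτ wᵢ` a.s., then so does `w₁ ⊓ w₂`. -/
theorem stmt_7 {Ω : Type*} {mΩ : MeasurableSpace Ω} {μ : Measure Ω} [IsProbabilityMeasure μ]
    {m : MeasurableSpace Ω} (hm : m ≤ mΩ) {d : ℕ}
    (G : Set (EuclideanSpace ℝ (Fin d))) (g : EuclideanSpace ℝ (Fin d) → ℝ)
    (I discτ discρ : Ω → ℝ)
    (hdiscτ : ∀ ω, 0 ≤ discτ ω) (hdiscρ : ∀ ω, 0 ≤ discρ ω)
    (Xρ ξ : Ω → EuclideanSpace ℝ (Fin d))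
    (w₁ w₂ : EuclideanSpace ℝ (Fin d) → ℝ)
    (hc₁ : Continuous w₁) (hc₂ : Continuous w₂)
    (hb₁ : ∃ M, ∀ x, |w₁ x| ≤ M) (hb₂ : ∃ M, ∀ x, |w₂ x| ≤ M)
    (hg₁ : ∀ x ∈ frontier G, g x ≤ w₁ x) (hg₂ : ∀ x ∈ frontier G, g x ≤ w₂ x)
    (hint₁ : Integrable (fun ω => I ω + discρ ω * w₁ (Xρ ω)) μ)
    (hint₂ : Integrable (fun ω => I ω + discρ ω * w₂ (Xρ ω)) μ)
    (hintmin : Integrable (fun ω => I ω + discρ ω * min (w₁ (Xρ ω)) (w₂ (Xρ ω))) μ)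
    (hsup₁ : μ[fun ω => I ω + discρ ω * w₁ (Xρ ω)|m] ≤ᵐ[μ] fun ω => discτ ω * w₁ (ξ ω))
    (hsup₂ : μ[fun ω => I ω + discρ ω * w₂ (Xρ ω)|m] ≤ᵐ[μ] fun ω => discτ ω * w₂ (ξ ω)) :
    Continuous (fun x => min (w₁ x) (w₂ x)) ∧
    (∃ M, ∀ x, |min (w₁ x) (w₂ x)| ≤ M) ∧
    (∀ x ∈ frontier G, g x ≤ min (w₁ x) (w₂ x)) ∧
    (μ[fun ω => I ω + discρ ω * min (w₁ (Xρ ω)) (w₂ (Xρ ω))|m]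
      ≤ᵐ[μ] fun ω => discτ ω * min (w₁ (ξ ω)) (w₂ (ξ ω))) := by

  refine ⟨hc₁.min hc₂, ?_, ?_, ?_⟩
  · obtain ⟨M₁, h₁⟩ := hb₁; obtain ⟨M₂, h₂⟩ := hb₂
    refine ⟨M₁ + M₂, fun x => ?_⟩
    have : |min (w₁ x) (w₂ x)| ≤ max |w₁ x| |w₂ x| := abs_min_le_max_abs_abs
    have h1 := h₁ x; have h2 := h₂ x
    have hM1 : (0:ℝ) ≤ M₁ := le_trans (abs_nonneg _) h1
    have hM2 : (0:ℝ) ≤ M₂ := le_trans (abs_nonneg _) h2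
    calc |min (w₁ x) (w₂ x)| ≤ max |w₁ x| |w₂ x| := this
      _ ≤ M₁ + M₂ := max_le (by linarith) (by linarith)
  · exact fun x hx => le_min (hg₁ x hx) (hg₂ x hx)
  · have key : ∀ (w : EuclideanSpace ℝ (Fin d) → ℝ),
        Integrable (fun ω => I ω + discρ ω * w (Xρ ω)) μ →
        (μ[fun ω => I ω + discρ ω * w (Xρ ω)|m] ≤ᵐ[μ] fun ω => discτ ω * w (ξ ω)) →
        (∀ x, min (w₁ x) (w₂ x) ≤ w x) →
        μ[fun ω => I ω + discρ ω * min (w₁ (Xρ ω)) (w₂ (Xρ ω))|m]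
          ≤ᵐ[μ] fun ω => discτ ω * w (ξ ω) := by
      intro w hint hsup hle
      have hmono : μ[fun ω => I ω + discρ ω * min (w₁ (Xρ ω)) (w₂ (Xρ ω))|m]
          ≤ᵐ[μ] μ[fun ω => I ω + discρ ω * w (Xρ ω)|m] := by
        refine condExp_mono hintmin hint (Filter.Eventually.of_forall fun ω => ?_)
        simp only []
        have := mul_le_mul_of_nonneg_left (hle (Xρ ω)) (hdiscρ ω)
        linarith
      exact hmono.trans hsup
    have k1 := key w₁ hint₁ hsup₁ (fun x => min_le_left _ _)
    have k2 := key w₂ hint₂ hsup₂ (fun x => min_le_right _ _)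
    filter_upwards [k1, k2] with ω h1 h2
    have : discτ ω * min (w₁ (ξ ω)) (w₂ (ξ ω))
        = min (discτ ω * w₁ (ξ ω)) (discτ ω * w₂ (ξ ω)) :=
      mul_min_of_nonneg _ _ (hdiscτ ω)
    rw [this]
    exact le_min h1 h2
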